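/- arXiv:0704.1006 — 7 statements merged into one kernel-verified Lean document; each statement's English description precedes it below -/
import Mathlib

section
/- Let g_k, k ∈ {1,…,l}, be orientation-preserving diffeomorphisms of the circle S¹ = ℝ/ℤ (with normalized length), where g_k is of class C^{1+τ_k} with τ_k ∈ (0,1]. Let C_k be the τ_k-Hölder constant of log(g_k'), let C = max{C₁,…,C_l} and τ = max{τ₁,…,τ_l}. Fix n₀ ∈ ℕ, a choice k_n ∈ {1,…,l} for each n ≤ n₀, an interval I ⊂ S¹, and a constant S > 0 such that S ≥ ∑_{n=0}^{n₀−1} |g_{k_n} ⋯ g_{k_1}(I)|^{τ_{k_{n+1}}}. If n ≤ n₀ is such that g_{k_n} ⋯ g_{k_1}(I) does not intersect I but is contained in the L-neighborhood of I, where L := |I| / (2 exp(2^τ C S)), then the composition h_n = g_{k_n} ⋯ g_{k_1} has a hyperbolic fixed point: there exists x with h_n(x) = x and h_n'(x) ≤ 1/2. -/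
/-!
Write `I = [a, b]`, `h_j = g_{k_j} ∘ ⋯ ∘ g_{k_1}` and `E = 2^τ C S`, so that `2L e^E = |I|`, and
let `J ⊇ I` be an extension of `I` by total length `2L`. By induction on `j ≤ n₀`,
`|h_j J| ≤ 2 |h_j I|`: if this holds below `j`, the Hölder bound for `log g'` makes `log h_j'`
oscillate on `J` by at most `∑ C (2 |h_i I|)^τ ≤ E`, so `h_j' ≤ e^E |h_j I| / |I|` on `J` (mean
value theorem on `I`), and the two pieces of `J \ I` are stretched to total length at most
`2L e^E |h_j I| / |I| = |h_j I|`. Hence `h_n' ≤ |h_n I| / 2L` on every such `J`.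

The arc `h_n(I)` lies in a gap `(b + m, a + m + 1)` between translates of `I`, and within `L` of one
end of it. Then `|h_n I| < L`, so `h_n' ≤ 1/2` on the `J` reaching across that end by `2L`, and a
translate of `h_n` maps the segment `J \ I` into itself.
-/

open Set Real Finset

def compSeq (G : ℕ → ℝ → ℝ) : ℕ → ℝ → ℝ
  | 0 => id
  | j + 1 => G j ∘ compSeq G j

section CompSeq

variable {G : ℕ → ℝ → ℝ}

theorem compSeq_eq_of_rec {h : ℕ → ℝ → ℝ} (h0 : h 0 = id)
    (hrec : ∀ j, h (j + 1) = G j ∘ h j) :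
    h = compSeq G := by
  funext j
  induction j with
  | zero => exact h0
  | succ j ih => rw [hrec, ih]; rfl

theorem differentiable_compSeq (hG : ∀ i, Differentiable ℝ (G i)) :
    ∀ j, Differentiable ℝ (compSeq G j)
  | 0 => differentiable_id
  | j + 1 => (hG j).comp (differentiable_compSeq hG j)

theorem deriv_compSeq_succ (hG : ∀ i, Differentiable ℝ (G i)) (j : ℕ) (x : ℝ) :
    deriv (compSeq G (j + 1)) x = deriv (G j) (compSeq G j x) * deriv (compSeq G j) x :=
  ((hG j _).hasDerivAt.comp x (differentiable_compSeq hG j x).hasDerivAt).deriv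

theorem deriv_compSeq_pos (hG : ∀ i, Differentiable ℝ (G i))
    (hGpos : ∀ i x, 0 < deriv (G i) x) :
    ∀ j x, 0 < deriv (compSeq G j) x
  | 0, x => by simp [compSeq]
  | j + 1, x => by
    rw [deriv_compSeq_succ hG]
    exact mul_pos (hGpos _ _) (deriv_compSeq_pos hG hGpos j x)

theorem strictMono_compSeq (hG : ∀ i, Differentiable ℝ (G i))
    (hGpos : ∀ i x, 0 < deriv (G i) x) (j : ℕ) : StrictMono (compSeq G j) :=
  strictMono_of_deriv_pos (deriv_compSeq_pos hG hGpos j)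

theorem log_deriv_compSeq (hG : ∀ i, Differentiable ℝ (G i))
    (hGpos : ∀ i x, 0 < deriv (G i) x) (j : ℕ) (x : ℝ) :
    log (deriv (compSeq G j) x) = ∑ i ∈ range j, log (deriv (G i) (compSeq G i x)) := by
  induction j with
  | zero => simp [compSeq]
  | succ j ih =>
    rw [deriv_compSeq_succ hG, log_mul (hGpos _ _).ne' (deriv_compSeq_pos hG hGpos j x).ne',
      sum_range_succ, ih, add_comm]

theorem compSeq_add_one (hG1 : ∀ i x, G i (x + 1) = G i x + 1) :
    ∀ j x, compSeq G j (x + 1) = compSeq G j x + 1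
  | 0, _ => rfl
  | j + 1, x => by simp only [compSeq, Function.comp_apply, compSeq_add_one hG1 j, hG1]

theorem log_deriv_compSeq_sub_le (hG : ∀ i, Differentiable ℝ (G i))
    (hGpos : ∀ i x, 0 < deriv (G i) x) {C r : ℕ → NNReal}
    (hHol : ∀ i, HolderWith (C i) (r i) fun x => log (deriv (G i) x)) (j : ℕ) (x y : ℝ) :
    log (deriv (compSeq G j) x) - log (deriv (compSeq G j) y) ≤
      ∑ i ∈ range j, C i * dist (compSeq G i x) (compSeq G i y) ^ (r i : ℝ) := by
  rw [log_deriv_compSeq hG hGpos, log_deriv_compSeq hG hGpos, ← sum_sub_distrib]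
  exact sum_le_sum fun i _ =>
    (le_abs_self _).trans_eq (Real.dist_eq _ _).symm |>.trans ((hHol i).dist_le _ _)

end CompSeq

theorem sub_le_mul_sub_of_deriv_le_on_Icc {f : ℝ → ℝ} (hf : Differentiable ℝ f)
    {p q B : ℝ} (hB : ∀ x ∈ Icc p q, deriv f x ≤ B) {x y : ℝ} (hx : x ∈ Icc p q)
    (hy : y ∈ Icc p q) (hxy : x ≤ y) : f y - f x ≤ B * (y - x) :=
  (convex_Icc p q).image_sub_le_mul_sub_of_deriv_le hf.continuous.continuousOn hf.differentiableOn
    (fun z hz => hB z (interior_subset hz)) x hx y hy hxy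

theorem sub_le_add_mul_of_deriv_le {f : ℝ → ℝ} (hf : Differentiable ℝ f) {a b u v B : ℝ}
    (hu : u ≤ a) (hab : a ≤ b) (hv : b ≤ v) (hB : ∀ x ∈ Icc u v, deriv f x ≤ B) :
    f v - f u ≤ f b - f a + (v - b + (a - u)) * B := by
  have hleft := sub_le_mul_sub_of_deriv_le_on_Icc hf hB (left_mem_Icc.2 (hu.trans (hab.trans hv)))
    ⟨hu, hab.trans hv⟩ hu
  have hright := sub_le_mul_sub_of_deriv_le_on_Icc hf hB ⟨hu.trans hab, hv⟩
    (right_mem_Icc.2 (hu.trans (hab.trans hv))) hv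
  linarith

theorem deriv_le_exp_mul_slope {f : ℝ → ℝ} (hf : Differentiable ℝ f)
    (hpos : ∀ x, 0 < deriv f x)    {a b u v E : ℝ} (hab : a < b) (hu : u ≤ a) (hv : b ≤ v)
    (hE : ∀ x ∈ Icc u v, ∀ y ∈ Icc u v, log (deriv f x) - log (deriv f y) ≤ E) :
    ∀ x ∈ Icc u v, deriv f x ≤ exp E * ((f b - f a) / (b - a)) := by
  obtain ⟨ξ, hξ, hξf⟩ :=
    exists_deriv_eq_slope f hab hf.continuous.continuousOn hf.differentiableOn
  intro x hx
  have hlog := hE x hx ξ ⟨hu.trans hξ.1.le, hξ.2.le.trans hv⟩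
  calc deriv f x = exp (log (deriv f x)) := (exp_log (hpos x)).symm
    _ ≤ exp (E + log (deriv f ξ)) := exp_le_exp.2 (by linarith)
    _ = exp E * ((f b - f a) / (b - a)) := by rw [exp_add, exp_log (hpos ξ), hξf]

theorem sum_mul_two_mul_rpow_le {ι : Type*} (s : Finset ι) {c d t : ι → ℝ} {M T S : ℝ}
    (hcM : ∀ i, c i ≤ M) (hM : 0 ≤ M) (htT : ∀ i, t i ≤ T)
    (hd : ∀ i, 0 ≤ d i) (hS : ∑ i ∈ s, d i ^ t i ≤ S) :
    ∑ i ∈ s, c i * (2 * d i) ^ t i ≤ 2 ^ T * M * S :=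
  calc ∑ i ∈ s, c i * (2 * d i) ^ t i ≤ ∑ i ∈ s, 2 ^ T * M * d i ^ t i :=
        sum_le_sum fun i _ => by
          rw [mul_rpow zero_le_two (hd i), ← mul_assoc, mul_comm (2 ^ T) M]
          gcongr
          exacts [rpow_nonneg (hd i) _, hcM i, one_le_two, htT i]
    _ = 2 ^ T * M * ∑ i ∈ s, d i ^ t i := (mul_sum _ _ _).symm
    _ ≤ 2 ^ T * M * S := mul_le_mul_of_nonneg_left hS (mul_nonneg (by positivity) hM)

section Distortion

variable {G : ℕ → ℝ → ℝ} {C r : ℕ → NNReal} {a b u v E : ℝ}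

theorem deriv_compSeq_le_of_width (hG : ∀ i, Differentiable ℝ (G i))
    (hGpos : ∀ i x, 0 < deriv (G i) x)
    (hHol : ∀ i, HolderWith (C i) (r i) fun x => log (deriv (G i) x))
    (hab : a < b) (hu : u ≤ a) (hv : b ≤ v) {j n₀ : ℕ} (hj : j ≤ n₀)
    (hE : ∑ i ∈ range n₀, C i * (2 * (compSeq G i b - compSeq G i a)) ^ (r i : ℝ) ≤ E)
    (hwidth : ∀ i < j, compSeq G i v - compSeq G i u ≤ 2 * (compSeq G i b - compSeq G i a)) :
    ∀ x ∈ Icc u v, deriv (compSeq G j) x ≤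
      exp E * ((compSeq G j b - compSeq G j a) / (b - a)) := by
  have hmono i := (strictMono_compSeq hG hGpos i).monotone
  have hEj : ∑ i ∈ range j, C i * (2 * (compSeq G i b - compSeq G i a)) ^ (r i : ℝ) ≤ E :=
    (sum_le_sum_of_subset_of_nonneg (range_subset_range.2 hj) fun i _ _ =>
      mul_nonneg (C i).coe_nonneg (rpow_nonneg (by linarith [hmono i hab.le]) _)).trans hE
  refine deriv_le_exp_mul_slope (differentiable_compSeq hG j) (deriv_compSeq_pos hG hGpos j) hab
    hu hv fun x hx y hy => (log_deriv_compSeq_sub_le hG hGpos hHol j x y).trans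
      (le_trans (sum_le_sum fun i hi => ?_) hEj)
  have hdist : dist (compSeq G i x) (compSeq G i y) ≤ 2 * (compSeq G i b - compSeq G i a) :=
    (Real.dist_le_of_mem_Icc ⟨hmono i hx.1, hmono i hx.2⟩ ⟨hmono i hy.1, hmono i hy.2⟩).trans
      (hwidth i (mem_range.1 hi))
  gcongr

theorem compSeq_width_le (hG : ∀ i, Differentiable ℝ (G i)) (hGpos : ∀ i x, 0 < deriv (G i) x)
    (hHol : ∀ i, HolderWith (C i) (r i) fun x => log (deriv (G i) x))
    (hab : a < b) (hu : u ≤ a) (hv : b ≤ v) {n₀ : ℕ}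
    (hE : ∑ i ∈ range n₀, C i * (2 * (compSeq G i b - compSeq G i a)) ^ (r i : ℝ) ≤ E)
    (hL : (v - b + (a - u)) * exp E ≤ b - a) :
    ∀ j ≤ n₀, compSeq G j v - compSeq G j u ≤ 2 * (compSeq G j b - compSeq G j a) := by
  intro j
  induction j using Nat.strong_induction_on with
  | _ j ih =>
  intro hj
  set Δ := compSeq G j b - compSeq G j a
  have hΔ : 0 ≤ Δ := sub_nonneg.2 ((strictMono_compSeq hG hGpos j).monotone hab.le)
  have hderiv := deriv_compSeq_le_of_width hG hGpos hHol hab hu hv hj hE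
    fun i hi => ih i hi (hi.le.trans hj)
  have hext : (v - b + (a - u)) * (exp E * (Δ / (b - a))) ≤ Δ :=
    calc (v - b + (a - u)) * (exp E * (Δ / (b - a)))
      _ = (v - b + (a - u)) * exp E * (Δ / (b - a)) := (mul_assoc _ _ _).symm
      _ ≤ (b - a) * (Δ / (b - a)) := by gcongr
      _ = Δ := mul_div_cancel₀ _ (sub_pos.2 hab).ne'
  linarith [sub_le_add_mul_of_deriv_le (differentiable_compSeq hG j) hu hab.le hv hderiv]

theorem deriv_compSeq_le (hG : ∀ i, Differentiable ℝ (G i)) (hGpos : ∀ i x, 0 < deriv (G i) x)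
    (hHol : ∀ i, HolderWith (C i) (r i) fun x => log (deriv (G i) x))
    (hab : a < b) (hu : u ≤ a) (hv : b ≤ v) {n₀ : ℕ}
    (hE : ∑ i ∈ range n₀, C i * (2 * (compSeq G i b - compSeq G i a)) ^ (r i : ℝ) ≤ E)
    (hL : (v - b + (a - u)) * exp E ≤ b - a) {j : ℕ} (hj : j ≤ n₀) :
    ∀ x ∈ Icc u v, deriv (compSeq G j) x ≤
      exp E * ((compSeq G j b - compSeq G j a) / (b - a)) :=
  deriv_compSeq_le_of_width hG hGpos hHol hab hu hv hj hE fun i hi =>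
    compSeq_width_le hG hGpos hHol hab hu hv hE hL i (hi.le.trans hj)

end Distortion

theorem exists_int_gap {a b p q : ℝ} (hab : a ≤ b) (hpq : p ≤ q)
    (hdisj : ∀ m : ℤ, Disjoint (Icc (p + m) (q + m)) (Icc a b)) :
    ∃ m : ℤ, b + m < p ∧ q < a + m + 1 := by
  set m := ⌊p - b⌋
  have hm := Int.floor_le (p - b)
  have hm' := Int.lt_floor_add_one (p - b)
  refine ⟨m, lt_of_le_of_ne (by linarith) fun heq => ?_, ?_⟩
  · have hb : b ∈ Icc (p + ((-m : ℤ) : ℝ)) (q + ((-m : ℤ) : ℝ)) := by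
      push_cast
      constructor <;> linarith
    exact disjoint_left.1 (hdisj (-m)) hb ⟨hab, le_rfl⟩
  · by_contra! hq
    have hmax := le_max_right a (p - (m + 1))
    have hy : max a (p - (m + 1)) ∈
        Icc (p + ((-(m + 1) : ℤ) : ℝ)) (q + ((-(m + 1) : ℤ) : ℝ)) := by
      push_cast
      exact ⟨by linarith, max_le (by linarith) (by linarith)⟩
    exact disjoint_left.1 (hdisj (-(m + 1))) hy ⟨le_max_left _ _, max_le hab (by linarith)⟩

theorem lt_or_lt_of_forall_exists_abs_sub_lt {a b p q L : ℝ} {m : ℤ} (hpq : p ≤ q)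
    (hgap : b + 2 * L < a + 1)
    (hnbhd : ∀ y ∈ Icc p q, ∃ z ∈ Icc a b, ∃ m' : ℤ, |y - (z + m')| < L) :
    q < b + m + L ∨ a + m + 1 - L < p := by
  by_contra! hfar
  obtain ⟨z, hz, m', hm'⟩ := hnbhd (max p (b + m + L)) ⟨le_max_left _ _, max_le hpq hfar.1⟩
  have hyl := le_max_right p (b + m + L)
  have hyr : max p (b + m + L) ≤ a + m + 1 - L := max_le hfar.2 (by linarith)
  rcases le_or_gt m' m with hle | hgt
  · have : (m' : ℝ) ≤ m := Int.cast_le.2 hle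
    linarith [le_abs_self (max p (b + m + L) - (z + m')), hz.2]
  · have : (m : ℝ) + 1 ≤ m' := by exact_mod_cast hgt
    linarith [neg_abs_le (max p (b + m + L) - (z + m')), hz.1]

theorem exists_apply_eq_add {f : ℝ → ℝ} (hf : Continuous f) {p q c : ℝ} (hpq : p ≤ q)
    (hp : p + c ≤ f p) (hq : f q ≤ q + c) : ∃ x ∈ Icc p q, f x = x + c := by
  obtain ⟨x, hx, hfx⟩ := intermediate_value_Icc' hpq (hf.sub continuous_id).continuousOn
    (show c ∈ Icc (f q - q) (f p - p) from ⟨by linarith, by linarith⟩)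
  exact ⟨x, hx, by simp only [Pi.sub_apply, id] at hfx; linarith⟩

theorem exists_hyperbolic_fixed_point {f : ℝ → ℝ} {a b L : ℝ} (hf : Differentiable ℝ f)
    (hmono : Monotone f) (hf1 : ∀ x, f (x + 1) = f x + 1) (hab : a ≤ b) (hL : 0 < L)
    (hderiv : ∀ u v, u ≤ a → b ≤ v → v - b + (a - u) = 2 * L →
      ∀ x ∈ Icc u v, deriv f x ≤ (f b - f a) / (2 * L))
    (hdisj : ∀ m : ℤ, Disjoint (Icc (f a + m) (f b + m)) (Icc a b))
    (hnbhd : ∀ y ∈ Icc (f a) (f b), ∃ z ∈ Icc a b, ∃ m : ℤ, |y - (z + m)| < L) :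
    ∃ (x : ℝ) (m : ℤ), f x = x + m ∧ deriv f x ≤ 1 / 2 := by
  obtain ⟨m, hm₁, hm₂⟩ := exists_int_gap hab (hmono hab) hdisj
  have hhalf : f b - f a < L → ∀ u v, u ≤ a → b ≤ v → v - b + (a - u) = 2 * L →
      ∀ x ∈ Icc u v, deriv f x ≤ 1 / 2 := fun hΔ u v hu hv huv x hx =>
    (hderiv u v hu hv huv x hx).trans ((div_le_iff₀ (by positivity)).2 (by linarith))
  rcases le_or_gt (a + 1) (b + 2 * L) with hshort | hlong
  · -- `[a, b + 2L]` contains a whole period, on which `f' < 1`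
    have hlt : (f b - f a) / (2 * L) < 1 := (div_lt_one (by positivity)).2 (by linarith)
    have hperiod := sub_le_mul_sub_of_deriv_le_on_Icc hf
      (hderiv a (b + 2 * L) le_rfl (by linarith) (by ring)) (left_mem_Icc.2 (by linarith))
      ⟨by linarith, hshort⟩ (by linarith : a ≤ a + 1)
    rw [hf1, add_sub_cancel_left, add_sub_cancel_left, mul_one] at hperiod
    linarith
  rcases lt_or_lt_of_forall_exists_abs_sub_lt (m := m) (hmono hab) hlong hnbhd with hright | hleft
  · have hJ := hhalf (by linarith) a (b + 2 * L) le_rfl (by linarith) (by ring)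
    have hstep := sub_le_mul_sub_of_deriv_le_on_Icc hf hJ ⟨hab, by linarith⟩
      (right_mem_Icc.2 (by linarith)) (by linarith)
    obtain ⟨x, hx, hfx⟩ :=
      exists_apply_eq_add (c := m) hf.continuous (by linarith : b ≤ b + 2 * L)
      (by linarith [hmono hab]) (by linarith)
    exact ⟨x, m, hfx, hJ x ⟨hab.trans hx.1, hx.2⟩⟩
  · have hJ := hhalf (by linarith) (a - 2 * L) b (by linarith) le_rfl (by ring)
    have hstep := sub_le_mul_sub_of_deriv_le_on_Icc hf hJ (left_mem_Icc.2 (by linarith))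
      ⟨by linarith, hab⟩ (by linarith)
    obtain ⟨x, hx, hfx⟩ := exists_apply_eq_add (c := m + 1) hf.continuous
      (by linarith : a - 2 * L ≤ a) (by linarith) (by linarith [hmono hab])
    exact ⟨x, m + 1, by rw [hfx]; push_cast; ring, hJ x ⟨hx.1, hx.2.trans hab⟩⟩

theorem stmt2_general (l : ℕ)
    (τ : Fin l → ℝ) (hτ0 : ∀ k, 0 < τ k)
    (g : Fin l → ℝ → ℝ)
    (hC1 : ∀ k, ContDiff ℝ 1 (g k))
    (hdeg : ∀ k x, g k (x + 1) = g k x + 1)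
    (hpos : ∀ k x, 0 < deriv (g k) x)
    (C : Fin l → NNReal)
    (hC : ∀ k, HolderWith (C k) (τ k).toNNReal (fun x => Real.log (deriv (g k) x)))
    (Cm τm : ℝ) (hCm : Cm = ⨆ k, (C k : ℝ)) (hτm : τm = ⨆ k, τ k)
    (n₀ : ℕ) (k : ℕ → Fin l)
    (a b : ℝ) (hab : a < b)
    (h : ℕ → ℝ → ℝ) (h0 : h 0 = id) (hrec : ∀ n, h (n + 1) = g (k (n + 1)) ∘ h n)
    (S : ℝ)
    (hSsum : ∑ n ∈ Finset.range n₀, (h n b - h n a) ^ τ (k (n + 1)) ≤ S)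
    (L : ℝ) (hL : L = (b - a) / (2 * Real.exp (2 ^ τm * Cm * S)))
    (n : ℕ) (hn : n ≤ n₀)
    (hdisj : ∀ m : ℤ, Disjoint (Set.Icc (h n a + m) (h n b + m)) (Set.Icc a b))
    (hnbhd : ∀ y ∈ Set.Icc (h n a) (h n b), ∃ z ∈ Set.Icc a b, ∃ m : ℤ, |y - (z + m)| < L) :
    ∃ (x : ℝ) (m : ℤ), h n x = x + m ∧ deriv (h n) x ≤ 1 / 2 := by
  set G : ℕ → ℝ → ℝ := fun i => g (k (i + 1))
  obtain rfl : h = compSeq G := compSeq_eq_of_rec h0 hrec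
  have hG i : Differentiable ℝ (G i) := (hC1 _).differentiable one_ne_zero
  have hGpos i : ∀ x, 0 < deriv (G i) x := hpos _
  have hmono := strictMono_compSeq hG hGpos
  have hτ i : ((τ (k (i + 1))).toNNReal : ℝ) = τ (k (i + 1)) := coe_toNNReal _ (hτ0 _).le
  have hE : ∑ i ∈ range n₀, (C (k (i + 1)) : ℝ) *
      (2 * (compSeq G i b - compSeq G i a)) ^ ((τ (k (i + 1))).toNNReal : ℝ) ≤
        2 ^ τm * Cm * S := by
    simp only [hτ]
    exact sum_mul_two_mul_rpow_le _
      (fun i => hCm ▸ le_ciSup (finite_range fun j => (C j : ℝ)).bddAbove _)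
      (hCm ▸ Real.iSup_nonneg fun j => (C j).coe_nonneg)
      (fun i => hτm ▸ le_ciSup (finite_range τ).bddAbove _)
      (fun i => sub_nonneg.2 ((hmono i).monotone hab.le)) hSsum
  have hLexp : 2 * L * exp (2 ^ τm * Cm * S) = b - a := by rw [hL]; field_simp
  refine exists_hyperbolic_fixed_point (differentiable_compSeq hG n) (hmono n).monotone
    (compSeq_add_one (fun i => hdeg _) n) hab.le (hL ▸ by positivity) ?_ hdisj hnbhd
  intro u v hu hv huv x hx
  calc deriv (compSeq G n) x
    _ ≤ exp (2 ^ τm * Cm * S) * ((compSeq G n b - compSeq G n a) / (b - a)) :=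
      deriv_compSeq_le hG hGpos (fun i => hC _) hab hu hv hE (by rw [huv, hLexp]) hn x hx
    _ = (compSeq G n b - compSeq G n a) / (2 * L) := by rw [← hLexp]; field_simp

/-- **Lemma 1.1 of Kleptsyn–Navas.** Circle diffeomorphisms of `S¹ = ℝ/ℤ` are encoded by
their degree-one lifts `g k : ℝ → ℝ`; an interval `I ⊆ S¹` of length `b - a < 1` is encoded
by `[a,b] ⊆ ℝ`, and the length of the arc `g_{k_n} ⋯ g_{k_1}(I)` is `h n b - h n a`, where
`h n = g_{k_n} ∘ ⋯ ∘ g_{k_1}`. `Cm` and `τm` are the maxima of the `τ_k`-Hölder constants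
`C k` of `log (g k)'` and of the exponents `τ k`. If `S ≥ ∑_{n<n₀} |h_n(I)|^{τ_{k_{n+1}}}`
and for some `n ≤ n₀` the arc `h_n(I)` does not intersect `I` (no integer translate of
`[h n a, h n b]` meets `[a,b]`) but is contained in the `L`-neighborhood of `I` (every
point of it lies within circle distance `< L` of `I`), where
`L = |I| / (2 exp(2^τm Cm S))`, then `h_n` has a hyperbolic fixed point on the circle:
a point `x` with `h n x = x + m` for some integer `m` and `(h n)'(x) ≤ 1/2`. -/
theorem stmt2 (l : ℕ) (hl : 0 < l)
    (τ : Fin l → ℝ) (hτ0 : ∀ k, 0 < τ k) (hτ1 : ∀ k, τ k ≤ 1)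
    (g : Fin l → ℝ → ℝ)
    (hC1 : ∀ k, ContDiff ℝ 1 (g k))
    (hdeg : ∀ k x, g k (x + 1) = g k x + 1)
    (hpos : ∀ k x, 0 < deriv (g k) x)
    (C : Fin l → NNReal)
    (hC : ∀ k, HolderWith (C k) (τ k).toNNReal (fun x => Real.log (deriv (g k) x)))
    (Cm τm : ℝ) (hCm : Cm = ⨆ k, (C k : ℝ)) (hτm : τm = ⨆ k, τ k)
    (n₀ : ℕ) (k : ℕ → Fin l)
    (a b : ℝ) (hab : a < b) (hlen : b - a < 1)
    (h : ℕ → ℝ → ℝ) (h0 : h 0 = id) (hrec : ∀ n, h (n + 1) = g (k (n + 1)) ∘ h n)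
    (S : ℝ) (hS : 0 < S)
    (hSsum : ∑ n ∈ Finset.range n₀, (h n b - h n a) ^ τ (k (n + 1)) ≤ S)
    (L : ℝ) (hL : L = (b - a) / (2 * Real.exp (2 ^ τm * Cm * S)))
    (n : ℕ) (hn : n ≤ n₀)
    (hdisj : ∀ m : ℤ, Disjoint (Set.Icc (h n a + m) (h n b + m)) (Set.Icc a b))
    (hnbhd : ∀ y ∈ Set.Icc (h n a) (h n b), ∃ z ∈ Set.Icc a b, ∃ m : ℤ, |y - (z + m)| < L) :
    ∃ (x : ℝ) (m : ℤ), h n x = x + m ∧ deriv (h n) x ≤ 1 / 2 :=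
  stmt2_general l τ hτ0 g hC1 hdeg hpos C hC Cm τm hCm hτm n₀ k a b hab h h0 hrec S hSsum L hL n hn
    hdisj hnbhd
end

section
/- Let g_k, k ∈ {1,…,l}, be orientation-preserving diffeomorphisms of the circle S¹ = ℝ/ℤ (with normalized length), where g_k is of class C^{1+τ_k} with τ_k ∈ (0,1]. Let C_k be the τ_k-Hölder constant of log(g_k'), let C = max{C₁,…,C_l} and τ = max{τ₁,…,τ_l}. Fix n₀ ∈ ℕ, a choice k_n ∈ {1,…,l} for each n ≤ n₀, an interval I ⊂ S¹, and a constant S > 0 such that S ≥ ∑_{n=0}^{n₀−1} |g_{k_n} ⋯ g_{k_1}(I)|^{τ_{k_{n+1}}}. Let L := |I| / (2 exp(2^τ C S)), let J be the closed 2L-neighborhood of I, and let I' be a connected component of J ∖ I. Then for every j ∈ {0,…,n₀}, writing h_j = g_{k_j} ⋯ g_{k_1}: (i) |h_j(I')| ≤ |h_j(I)|, and (ii) for all x, y ∈ I ∪ I' one has h_j'(x)/h_j'(y) ≤ exp(2^τ C S). -/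
/-!
By induction on `j`. The logarithm of `h_j'` is the sum of the `log g_{k_{i+1}}'` along the
orbit `h_i x`, `i < j`. For `x, y ∈ I ∪ I'` the points `h_i x, h_i y` lie in
`h_i(I) ∪ h_i(I')`, whose length is at most `2 |h_i(I)|` by (i) at the earlier step `i`, so the
Hölder bound makes the `i`-th term at most `2^τ C |h_i(I)|^{τ_{k_{i+1}}}`; summing gives (ii).
Then (i) at step `j` follows from the mean value theorem: the slopes of `h_j` on `I'` and on `I`
differ by a factor at most `exp(2^τ C S) = |I| / |I'|`.
-/

open Real Set Finset

lemma differentiable_of_deriv_pos {F : ℝ → ℝ} (hF : ∀ x, 0 < deriv F x) : Differentiable ℝ F :=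
  fun x => differentiableAt_of_deriv_ne_zero (hF x).ne'

lemma sub_le_sub_of_deriv_div_le {F : ℝ → ℝ} {a b u v K : ℝ} (hF : ∀ x, 0 < deriv F x)
    (hab : a < b) (huv : u < v)
    (hK : ∀ ξ ∈ Ioo u v, ∀ η ∈ Ioo a b, deriv F ξ / deriv F η ≤ K)
    (hlen : K * (v - u) ≤ b - a) :
    F v - F u ≤ F b - F a := by
  have hd := differentiable_of_deriv_pos hF
  obtain ⟨ξ, hξ, hξF⟩ := exists_deriv_eq_slope F huv hd.continuous.continuousOn hd.differentiableOn
  obtain ⟨η, hη, hηF⟩ := exists_deriv_eq_slope F hab hd.continuous.continuousOn hd.differentiableOn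
  rw [eq_div_iff (sub_pos.2 huv).ne'] at hξF
  rw [eq_div_iff (sub_pos.2 hab).ne'] at hηF
  have hξη : deriv F ξ ≤ K * deriv F η := (div_le_iff₀ (hF η)).1 (hK ξ hξ η hη)
  calc F v - F u = deriv F ξ * (v - u) := hξF.symm
    _ ≤ K * deriv F η * (v - u) := by gcongr
    _ = deriv F η * (K * (v - u)) := by ring
    _ ≤ deriv F η * (b - a) := by gcongr; exact (hF η).le
    _ = F b - F a := hηF

lemma HolderWith.sub_le_two_rpow_mul_rpow {φ : ℝ → ℝ} {C : NNReal} {τ τm Cm d x y : ℝ}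
    (hφ : HolderWith C τ.toNNReal φ) (hτ : 0 ≤ τ) (hττm : τ ≤ τm) (hCCm : C ≤ Cm)
    (hd : 0 ≤ d) (hxy : dist x y ≤ 2 * d) :
    φ x - φ y ≤ 2 ^ τm * Cm * d ^ τ := by
  have hφxy := hφ.dist_le_of_le hxy
  rw [Real.coe_toNNReal _ hτ, Real.dist_eq, mul_rpow zero_le_two hd] at hφxy
  have h2 : (2 : ℝ) ^ τ ≤ 2 ^ τm := rpow_le_rpow_of_exponent_le one_le_two hττm
  calc φ x - φ y ≤ C * (2 ^ τ * d ^ τ) := (le_abs_self _).trans hφxy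
    _ ≤ Cm * (2 ^ τm * d ^ τ) := by gcongr; exact C.coe_nonneg.trans hCCm
    _ = 2 ^ τm * Cm * d ^ τ := by ring

section CompositionSequence

variable {f h : ℕ → ℝ → ℝ} (hf : ∀ n x, 0 < deriv (f n) x) (h0 : h 0 = id)
  (hrec : ∀ n, h (n + 1) = f n ∘ h n)
include hf h0 hrec

lemma differentiable_compSeq_s3 (n : ℕ) : Differentiable ℝ (h n) := by
  induction n with
  | zero => rw [h0]; exact differentiable_id
  | succ n ih => rw [hrec]; exact (differentiable_of_deriv_pos (hf n)).comp ih

lemma deriv_compSeq_succ_s3 (n : ℕ) (x : ℝ) :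
    deriv (h (n + 1)) x = deriv (f n) (h n x) * deriv (h n) x := by
  rw [hrec]
  exact deriv_comp x ((differentiable_of_deriv_pos (hf n)).differentiableAt)
    ((differentiable_compSeq_s3 hf h0 hrec n).differentiableAt)

lemma deriv_compSeq_pos_s3 (n : ℕ) (x : ℝ) : 0 < deriv (h n) x := by
  induction n generalizing x with
  | zero => simp [h0]
  | succ n ih => rw [deriv_compSeq_succ_s3 hf h0 hrec]; exact mul_pos (hf _ _) (ih x)

lemma log_deriv_compSeq_s3 (n : ℕ) (x : ℝ) :
    log (deriv (h n) x) = ∑ i ∈ range n, log (deriv (f i) (h i x)) := by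
  induction n with
  | zero => simp [h0]
  | succ n ih =>
    rw [sum_range_succ, deriv_compSeq_succ_s3 hf h0 hrec,
      log_mul (hf _ _).ne' (deriv_compSeq_pos_s3 hf h0 hrec n x).ne', ih, add_comm]

lemma deriv_compSeq_div_le_exp_sum {n : ℕ} {x y : ℝ} {c : ℕ → ℝ}
    (hc : ∀ i < n, log (deriv (f i) (h i x)) - log (deriv (f i) (h i y)) ≤ c i) :
    deriv (h n) x / deriv (h n) y ≤ exp (∑ i ∈ range n, c i) := by
  have hx := deriv_compSeq_pos_s3 hf h0 hrec n x
  have hy := deriv_compSeq_pos_s3 hf h0 hrec n y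
  rw [← exp_log hx, ← exp_log hy, ← exp_sub, exp_le_exp, log_deriv_compSeq_s3 hf h0 hrec,
    log_deriv_compSeq_s3 hf h0 hrec, ← sum_sub_distrib]
  exact sum_le_sum fun i hi => hc i (mem_range.1 hi)

end CompositionSequence

lemma exists_Icc_of_component {a b L u v : ℝ} {I' : Set ℝ} (hab : a ≤ b) (hL : 0 ≤ L)
    (hI' : (I' = Ico (a - 2 * L) a ∧ u = a - 2 * L ∧ v = a) ∨
           (I' = Ioc b (b + 2 * L) ∧ u = b ∧ v = b + 2 * L)) :
    ∃ p q : ℝ, Icc a b ∪ I' ⊆ Icc p q ∧ Ioo u v ⊆ I' ∧ v - u = 2 * L ∧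
      ∀ F : ℝ → ℝ, F q - F p = (F b - F a) + (F v - F u) := by
  rcases hI' with ⟨rfl, hu, hv⟩ | ⟨rfl, hu, hv⟩ <;> subst u v
  · refine ⟨a - 2 * L, b, union_subset ?_ ?_, Ioo_subset_Ico_self, by ring, fun F => by ring⟩
    · exact Icc_subset_Icc (by linarith) le_rfl
    · exact fun x hx => ⟨hx.1, hx.2.le.trans hab⟩
  · refine ⟨a, b + 2 * L, union_subset ?_ ?_, Ioo_subset_Ioc_self, by ring, fun F => by ring⟩
    · exact Icc_subset_Icc le_rfl (by linarith)
    · exact fun x hx => ⟨hab.trans hx.1.le, hx.2⟩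

theorem stmt3_general (l : ℕ)
    (τ : Fin l → ℝ) (hτ0 : ∀ k, 0 < τ k)
    (g : Fin l → ℝ → ℝ)
    (hpos : ∀ k x, 0 < deriv (g k) x)
    (C : Fin l → NNReal)
    (hC : ∀ k, HolderWith (C k) (τ k).toNNReal (fun x => Real.log (deriv (g k) x)))
    (Cm τm : ℝ) (hCm : Cm = ⨆ k, (C k : ℝ)) (hτm : τm = ⨆ k, τ k)
    (n₀ : ℕ) (k : ℕ → Fin l)
    (a b : ℝ) (hab : a < b)
    (h : ℕ → ℝ → ℝ) (h0 : h 0 = id) (hrec : ∀ n, h (n + 1) = g (k (n + 1)) ∘ h n)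
    (S : ℝ)
    (hSsum : ∑ n ∈ Finset.range n₀, (h n b - h n a) ^ τ (k (n + 1)) ≤ S)
    (L : ℝ) (hL : L = (b - a) / (2 * Real.exp (2 ^ τm * Cm * S)))
    (I' : Set ℝ) (u v : ℝ)
    (hI' : (I' = Set.Ico (a - 2 * L) a ∧ u = a - 2 * L ∧ v = a) ∨
           (I' = Set.Ioc b (b + 2 * L) ∧ u = b ∧ v = b + 2 * L)) :
    ∀ j ≤ n₀, h j v - h j u ≤ h j b - h j a ∧
      ∀ x ∈ Set.Icc a b ∪ I', ∀ y ∈ Set.Icc a b ∪ I',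
        deriv (h j) x / deriv (h j) y ≤ Real.exp (2 ^ τm * Cm * S) := by
  have hf : ∀ n x, 0 < deriv (g (k (n + 1))) x := fun n => hpos _
  have hCk : ∀ k, (C k : ℝ) ≤ Cm :=
    fun k => hCm ▸ le_ciSup (finite_range fun k => (C k : ℝ)).bddAbove k
  have hτk : ∀ k, τ k ≤ τm := fun k => hτm ▸ le_ciSup (finite_range _).bddAbove k
  have hmono : ∀ n, StrictMono (h n) :=
    fun n => strictMono_of_deriv_pos (deriv_compSeq_pos_s3 hf h0 hrec n)
  have hlenI : ∀ n, 0 ≤ h n b - h n a := fun n => sub_nonneg.2 ((hmono n).monotone hab.le)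
  have hLpos : 0 < L := by rw [hL]; exact div_pos (sub_pos.2 hab) (by positivity)
  obtain ⟨p, q, hE, hI'uv, huv, hpq⟩ := exists_Icc_of_component hab.le hLpos.le hI'
  have distortion : ∀ j ≤ n₀, (∀ i < j, h i v - h i u ≤ h i b - h i a) →
      ∀ x ∈ Icc a b ∪ I', ∀ y ∈ Icc a b ∪ I',
        deriv (h j) x / deriv (h j) y ≤ exp (2 ^ τm * Cm * S) := by
    intro j hj hshorter x hx y hy
    refine (deriv_compSeq_div_le_exp_sum hf h0 hrec
      (c := fun i => 2 ^ τm * Cm * (h i b - h i a) ^ τ (k (i + 1))) fun i hi => ?_).trans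
      (exp_le_exp.2 ?_)
    · refine (hC _).sub_le_two_rpow_mul_rpow (hτ0 _).le (hτk _) (hCk _) (hlenI i) ?_
      have hxy := Real.dist_le_of_mem_Icc ((hmono i).monotone.mapsTo_Icc (hE hx))
        ((hmono i).monotone.mapsTo_Icc (hE hy))
      linarith [hpq (h i), hshorter i hi]
    · have hCm0 : 0 ≤ Cm := hCm ▸ Real.iSup_nonneg fun k => (C k).coe_nonneg
      rw [← mul_sum]
      refine mul_le_mul_of_nonneg_left ((sum_le_sum_of_subset_of_nonneg
        (range_subset_range.2 hj) fun i _ _ => rpow_nonneg (hlenI i) _).trans hSsum) ?_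
      positivity
  intro j hj
  induction j using Nat.strong_induction_on with
  | _ j IH =>
    have hratio := distortion j hj fun i hi => (IH i hi (hi.le.trans hj)).1
    refine ⟨sub_le_sub_of_deriv_div_le (deriv_compSeq_pos_s3 hf h0 hrec j) hab (by linarith)
      (fun ξ hξ η hη => hratio ξ (.inr (hI'uv hξ)) η (.inl (Ioo_subset_Icc_self hη)))
      (le_of_eq <| by rw [huv, hL]; field_simp), hratio⟩

/-- **The induction inside Lemma 1.1 of Kleptsyn–Navas.** Circle diffeomorphisms of
`S¹ = ℝ/ℤ` are encoded by their degree-one lifts `g k : ℝ → ℝ`; the interval `I ⊆ S¹`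
of length `b - a < 1` is encoded by `[a,b] ⊆ ℝ`, and the length of the arc
`g_{k_n} ⋯ g_{k_1}(I)` is `h n b - h n a`, where `h n = g_{k_n} ∘ ⋯ ∘ g_{k_1}`.
`Cm` and `τm` are the maxima of the `τ_k`-Hölder constants `C k` of `log (g k)'` and of
the exponents `τ k`. Let `L = |I|/(2 exp(2^τm Cm S))`, let `J = [a - 2L, b + 2L]` be the
closed `2L`-neighborhood of `I`, and let `I'` (with endpoints `u < v`) be one of the two
connected components `[a-2L, a[` and `]b, b+2L]` of `J ∖ I`. If
`S ≥ ∑_{n<n₀} |h_n(I)|^{τ_{k_{n+1}}}`, then for every `j ≤ n₀`: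
(i) `|h_j(I')| ≤ |h_j(I)|`, and (ii) `h_j'(x)/h_j'(y) ≤ exp(2^τm Cm S)` for all
`x, y ∈ I ∪ I'`. -/
theorem stmt3 (l : ℕ) (hl : 0 < l)
    (τ : Fin l → ℝ) (hτ0 : ∀ k, 0 < τ k) (hτ1 : ∀ k, τ k ≤ 1)
    (g : Fin l → ℝ → ℝ)
    (hC1 : ∀ k, ContDiff ℝ 1 (g k))
    (hdeg : ∀ k x, g k (x + 1) = g k x + 1)
    (hpos : ∀ k x, 0 < deriv (g k) x)
    (C : Fin l → NNReal)
    (hC : ∀ k, HolderWith (C k) (τ k).toNNReal (fun x => Real.log (deriv (g k) x)))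
    (Cm τm : ℝ) (hCm : Cm = ⨆ k, (C k : ℝ)) (hτm : τm = ⨆ k, τ k)
    (n₀ : ℕ) (k : ℕ → Fin l)
    (a b : ℝ) (hab : a < b) (hlen : b - a < 1)
    (h : ℕ → ℝ → ℝ) (h0 : h 0 = id) (hrec : ∀ n, h (n + 1) = g (k (n + 1)) ∘ h n)
    (S : ℝ) (hS : 0 < S)
    (hSsum : ∑ n ∈ Finset.range n₀, (h n b - h n a) ^ τ (k (n + 1)) ≤ S)
    (L : ℝ) (hL : L = (b - a) / (2 * Real.exp (2 ^ τm * Cm * S)))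
    (I' : Set ℝ) (u v : ℝ)
    (hI' : (I' = Set.Ico (a - 2 * L) a ∧ u = a - 2 * L ∧ v = a) ∨
           (I' = Set.Ioc b (b + 2 * L) ∧ u = b ∧ v = b + 2 * L)) :
    ∀ j ≤ n₀, h j v - h j u ≤ h j b - h j a ∧
      ∀ x ∈ Set.Icc a b ∪ I', ∀ y ∈ Set.Icc a b ∪ I',
        deriv (h j) x / deriv (h j) y ≤ Real.exp (2 ^ τm * Cm * S) :=
  stmt3_general l τ hτ0 g hpos C hC Cm τm hCm hτm n₀ k a b hab h h0 hrec S hSsum L hL I' u v hI'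
end

section
/- Let ℓ_{i,j} be positive real numbers, where i ∈ {1,…,m} and j ∈ {1,…,n}, whose total sum is less than or equal to 1. If τ ∈ (0,1) and A > 1, then the number of indices k ∈ {1,…,n} for which ∑_{i=1}^m ℓ_{i,k}^τ ≤ A · m^{1−τ} / n^τ is at least n(1 − 1/A). -/
/-!
By Hölder's inequality with exponents `1/τ` and `1/(1-τ)`, the `m n` numbers `ℓ i j ^ τ` have sum
at most `(m n)^(1-τ) (∑ ℓ i j)^τ ≤ (m n)^(1-τ) = n · m^(1-τ)/n^τ`, so the column sums
`∑ i, ℓ i k ^ τ` average at most `m^(1-τ)/n^τ`, and by Markov's inequality at most `n / A`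
columns exceed `A` times this average.
-/

open Finset

theorem Real.sum_rpow_le_card_rpow_mul_rpow_sum {ι : Type*} (s : Finset ι) {f : ι → ℝ}
    (hf : ∀ i ∈ s, 0 ≤ f i) {τ : ℝ} (hτ0 : 0 < τ) (hτ1 : τ < 1) :
    ∑ i ∈ s, f i ^ τ ≤ (#s : ℝ) ^ (1 - τ) * (∑ i ∈ s, f i) ^ τ := by
  have holder := Real.inner_le_Lp_mul_Lq_of_nonneg s (Real.HolderConjugate.inv_one_sub_inv hτ0 hτ1)
    (f := fun i => f i ^ τ) (g := fun _ => 1) (fun i hi => Real.rpow_nonneg (hf i hi) τ)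
    (fun _ _ => zero_le_one)
  have hpow : ∀ i ∈ s, (f i ^ τ) ^ τ⁻¹ = f i := fun i hi => Real.rpow_rpow_inv (hf i hi) hτ0.ne'
  simp only [mul_one, Real.one_rpow, sum_const, nsmul_eq_mul, one_div, inv_inv] at holder
  rw [sum_congr rfl hpow] at holder
  linarith

theorem card_mul_one_sub_one_div_le_card_of_sum_le {ι : Type*} [Fintype ι] {f : ι → ℝ} (hf : ∀ k, 0 ≤ f k)
    {c A : ℝ} (hc : 0 < c) (hA : 0 < A) (hsum : ∑ k, f k ≤ Fintype.card ι * c) :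
    (Fintype.card ι : ℝ) * (1 - 1 / A) ≤ Nat.card {k // f k ≤ A * c} := by
  classical
  set bad := univ.filter fun k => ¬ f k ≤ A * c
  have hbad : (#bad : ℝ) * (A * c) ≤ Fintype.card ι * c :=
    calc (#bad : ℝ) * (A * c) ≤ ∑ k ∈ bad, f k := by
          simpa using card_nsmul_le_sum bad f (A * c) fun k hk =>
            (not_le.mp (mem_filter.mp hk).2).le
      _ ≤ ∑ k, f k := sum_le_sum_of_subset_of_nonneg (subset_univ _) fun k _ _ => hf k
      _ ≤ Fintype.card ι * c := hsum
  have hbad' : (#bad : ℝ) ≤ Fintype.card ι / A :=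
    (le_div_iff₀ hA).mpr <| le_of_mul_le_mul_right (by linarith) hc
  have hsplit : (Nat.card {k // f k ≤ A * c} : ℝ) + #bad = Fintype.card ι := by
    rw [Nat.card_eq_fintype_card, Fintype.card_subtype]
    exact_mod_cast card_filter_add_card_filter_not _
  rw [mul_one_sub, mul_one_div]
  linarith

/-- **Lemma 2.3 of Kleptsyn–Navas.** If positive reals `ℓ i j` have total sum at most `1`,
`τ ∈ (0,1)` and `A > 1`, then the number of columns `k` with
`∑ i, ℓ i k ^ τ ≤ A · m^(1-τ)/n^τ` is at least `n (1 - 1/A)`. -/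
theorem stmt6 (m n : ℕ) (hm : 0 < m) (hn : 0 < n)
    (ℓ : Fin m → Fin n → ℝ) (hpos : ∀ i j, 0 < ℓ i j)
    (hsum : ∑ i, ∑ j, ℓ i j ≤ 1)
    (τ : ℝ) (hτ0 : 0 < τ) (hτ1 : τ < 1) (A : ℝ) (hA : 1 < A) :
    (n : ℝ) * (1 - 1 / A) ≤
      (Nat.card {k : Fin n // ∑ i, ℓ i k ^ τ ≤ A * ((m : ℝ) ^ (1 - τ) / (n : ℝ) ^ τ)} : ℝ) := by
  have hnR : (0 : ℝ) < n := by exact_mod_cast hn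
  have hc : (0 : ℝ) < (m : ℝ) ^ (1 - τ) / (n : ℝ) ^ τ := by positivity
  have hcol : ∑ k, ∑ i, ℓ i k ^ τ ≤ (n : ℝ) * ((m : ℝ) ^ (1 - τ) / (n : ℝ) ^ τ) :=
    calc ∑ k, ∑ i, ℓ i k ^ τ = ∑ p : Fin m × Fin n, ℓ p.1 p.2 ^ τ := by
          rw [sum_comm, Fintype.sum_prod_type]
      _ ≤ ((m : ℝ) * n) ^ (1 - τ) * (∑ p : Fin m × Fin n, ℓ p.1 p.2) ^ τ := by
          simpa using Real.sum_rpow_le_card_rpow_mul_rpow_sum univ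
            (f := fun p : Fin m × Fin n => ℓ p.1 p.2) (fun p _ => (hpos p.1 p.2).le) hτ0 hτ1
      _ ≤ ((m : ℝ) * n) ^ (1 - τ) := by
          rw [← Fintype.sum_prod_type'] at hsum
          exact mul_le_of_le_one_right (by positivity) <| Real.rpow_le_one
            (sum_nonneg fun p _ => (hpos p.1 p.2).le) hsum hτ0.le
      _ = (n : ℝ) * ((m : ℝ) ^ (1 - τ) / (n : ℝ) ^ τ) := by
          rw [Real.mul_rpow (Nat.cast_nonneg m) hnR.le, Real.rpow_sub hnR, Real.rpow_one]
          ring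
  simpa using card_mul_one_sub_one_div_le_card_of_sum_le (fun k => sum_nonneg fun i _ =>
    Real.rpow_nonneg (hpos i k).le τ) hc (zero_lt_one.trans hA) (by simpa using hcol)
end

section
/- Fix an integer d ≥ 2 and, for m ≥ 1, rectangles R_m = [[0, x_{1,m}]] × ⋯ × [[0, x_{d,m}]] ⊂ ℕ₀^d with x_{k,m} ≥ x_{k,m−1} for every k, with strict inequality if and only if k ≡ m (mod d), starting from R₀ = {(0,…,0)}; let s(m) ∈ {1,…,d} denote the residue class of m modulo d. Suppose that inside each rectangle R_m a set 𝓛(m) of complete lines in the s(m)-direction is chosen whose proportion, among all lines in that direction inside R_m, is at least 1 − 1/A_m, where A_m > 1. If M₀ ∈ ℕ satisfies ∑_{m=1}^{M₀} 1/A_m < 1, then there exist lines L_m ∈ 𝓛(m), m ∈ {1,…,M₀}, such that L_{m+1} intersects L_m for every m < M₀. -/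
/-- The (complete) line in the `e`-direction inside the rectangle
`[[0, x 1]] × ⋯ × [[0, x d]] ⊆ ℕ₀^d` through the base point `p` (a point with `p e = 0`):
all coordinates except the `e`-th are fixed equal to those of `p`, and the `e`-th one
ranges over `[[0, x e]]`. -/
def lineIn {d : ℕ} (x : Fin d → ℕ) (e : Fin d) (p : Fin d → ℕ) : Set (Fin d → ℕ) :=
  {q | (∀ j, j ≠ e → q j = p j) ∧ q e ≤ x e}

/-!
Call a point of `L m` extendable for `k` steps if it starts a chain of consecutively related
points of `L m, …, L (m + k)`. Two lines of consecutive levels, in the distinct directions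
`a = s m` and `b = s (m + 1)`, meet as soon as their base points agree off `{a, b}`. Forgetting
these two coordinates maps the lines of both levels onto one and the same box, with fibres of
constant size; hence the proportion of lines of level `m` meeting no line of a set `B` of level
`m + 1` is at most the proportion of lines of level `m + 1` missing from `B`. By downward
induction on `m`, the lines of level `m` extendable up to level `M₀` form a proportion at least
`1 - ∑_{i=m}^{M₀} 1/A_i`, which is positive for `m = 1`.
-/

open Finset

namespace ChainOfLines

section Chain

variable {α : Type*} (L : ℕ → Finset α) (R : ℕ → α → α → Prop)

open Classical in
noncomputable def extendable : ℕ → ℕ → Finset α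
  | 0, m => L m
  | k + 1, m => {p ∈ L m | ∃ q ∈ extendable k (m + 1), R m p q}

variable {L R}

lemma extendable_subset (k m : ℕ) : extendable L R k m ⊆ L m := by
  cases k <;> simp [extendable]

lemma mem_extendable_succ {k m : ℕ} {p : α} :
    p ∈ extendable L R (k + 1) m ↔ p ∈ L m ∧ ∃ q ∈ extendable L R k (m + 1), R m p q := by
  simp [extendable]

lemma exists_chain_of_mem_extendable {k m : ℕ} {p : α} (hp : p ∈ extendable L R k m) :
    ∃ c : ℕ → α, c m = p ∧ (∀ i, m ≤ i → i ≤ m + k → c i ∈ L i) ∧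
      ∀ i, m ≤ i → i < m + k → R i (c i) (c (i + 1)) := by
  induction k generalizing m p with
  | zero =>
    refine ⟨fun _ => p, rfl, fun i hmi him => ?_, fun i hmi him => by omega⟩
    obtain rfl : i = m := by omega
    exact extendable_subset 0 i hp
  | succ k ih =>
    obtain ⟨hpL, q, hq, hpq⟩ := mem_extendable_succ.mp hp
    obtain ⟨c, hcq, hcL, hcR⟩ := ih hq
    refine ⟨Function.update c m p, by simp, fun i hmi him => ?_, fun i hmi him => ?_⟩
    · rcases hmi.eq_or_lt with rfl | hlt
      · simpa using hpL
      · simpa [hlt.ne'] using hcL i hlt (by omega)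
    · rcases hmi.eq_or_lt with rfl | hlt
      · simpa [hcq] using hpq
      · simpa [hlt.ne', (hlt.trans (Nat.lt_succ_self i)).ne'] using hcR i hlt (by omega)

variable {N ε : ℕ → ℝ}

lemma card_extendable_ge (hN : ∀ m, 1 ≤ m → 0 < N m)
    (hL : ∀ m, 1 ≤ m → (1 - ε m) * N m ≤ #(L m))
    (hstep : ∀ m, 1 ≤ m → ∀ B ⊆ L (m + 1), ∀ Bad ⊆ L m,
      (∀ p ∈ Bad, ∀ q ∈ B, ¬ R m p q) → #Bad * N (m + 1) ≤ (N (m + 1) - #B) * N m)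
    (k m : ℕ) (hm : 1 ≤ m) :
    (1 - ∑ i ∈ Icc m (m + k), ε i) * N m ≤ #(extendable L R k m) := by
  classical
  induction k generalizing m with
  | zero => simpa [extendable] using hL m hm
  | succ k ih =>
    set B := extendable L R k (m + 1)
    set C := L m \ extendable L R (k + 1) m
    set S := ∑ i ∈ Icc (m + 1) (m + 1 + k), ε i
    have hB : (1 - S) * N (m + 1) ≤ #B := ih (m + 1) (by omega)
    have hC : #C * N (m + 1) ≤ (N (m + 1) - #B) * N m :=
      hstep m hm B (extendable_subset _ _) C sdiff_subset fun p hp q hq hpq =>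
        (mem_sdiff.mp hp).2 (mem_extendable_succ.mpr ⟨(mem_sdiff.mp hp).1, q, hq, hpq⟩)
    have hC' : (#C : ℝ) ≤ S * N m := by nlinarith [hN (m + 1) (by omega), hN m hm]
    have hcard : (#(L m) : ℝ) = #C + #(extendable L R (k + 1) m) := by
      exact_mod_cast (card_sdiff_add_card_eq_card (extendable_subset _ _)).symm
    have hsum : ∑ i ∈ Icc m (m + (k + 1)), ε i = ε m + S := by
      rw [← insert_Icc_add_one_left_eq_Icc (by omega), sum_insert (by simp)]
      simp only [S]; ring_nf
    rw [hsum]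
    nlinarith [hL m hm]

theorem exists_chain_of_sum_lt_one [Nonempty α] (hN : ∀ m, 1 ≤ m → 0 < N m)
    (hL : ∀ m, 1 ≤ m → (1 - ε m) * N m ≤ #(L m))
    (hstep : ∀ m, 1 ≤ m → ∀ B ⊆ L (m + 1), ∀ Bad ⊆ L m,
      (∀ p ∈ Bad, ∀ q ∈ B, ¬ R m p q) → #Bad * N (m + 1) ≤ (N (m + 1) - #B) * N m)
    (M₀ : ℕ) (hε : ∑ m ∈ Icc 1 M₀, ε m < 1) :
    ∃ c : ℕ → α, (∀ m, 1 ≤ m → m ≤ M₀ → c m ∈ L m) ∧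
      ∀ m, 1 ≤ m → m < M₀ → R m (c m) (c (m + 1)) := by
  rcases Nat.eq_zero_or_pos M₀ with rfl | hM₀
  · exact ⟨fun _ => Classical.arbitrary α, fun m h₁ h₂ => by omega, fun m h₁ h₂ => by omega⟩
  have hpos : 0 < (#(extendable L R (M₀ - 1) 1) : ℝ) := by
    have h := card_extendable_ge hN hL hstep (M₀ - 1) 1 le_rfl
    rw [show 1 + (M₀ - 1) = M₀ by omega] at h
    nlinarith [hN 1 le_rfl]
  obtain ⟨p, hp⟩ := card_pos.mp (by exact_mod_cast hpos)
  obtain ⟨c, -, hcL, hcR⟩ := exists_chain_of_mem_extendable hp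
  exact ⟨c, fun m h₁ h₂ => hcL m h₁ (by omega), fun m h₁ h₂ => hcR m h₁ (by omega)⟩

end Chain

lemma card_mul_card_le_of_fiberwise {α β γ : Type*} [DecidableEq γ] {P : Finset α} {Q : Finset β}
    {T : Finset γ} {f : α → γ} {g : β → γ} {c₁ c₂ : ℕ}
    (hfT : ∀ p ∈ P, f p ∈ T) (hgT : ∀ q ∈ Q, g q ∈ T)
    (hf : ∀ t ∈ T, #{p ∈ P | f p = t} = c₁) (hg : ∀ t ∈ T, #{q ∈ Q | g q = t} = c₂)
    {Bad : Finset α} {B : Finset β} (hBad : Bad ⊆ P) (hB : B ⊆ Q)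
    (hdisj : ∀ p ∈ Bad, ∀ q ∈ B, f p ≠ g q) :
    #Bad * #Q ≤ (#Q - #B) * #P := by
  classical
  have hP : #P = #T * c₁ := by rw [card_eq_sum_card_fiberwise hfT, sum_const_nat hf]
  have hQ : #Q = #T * c₂ := by rw [card_eq_sum_card_fiberwise hgT, sum_const_nat hg]
  set U := T \ B.image g
  have hPU : #{p ∈ P | f p ∈ U} = #U * c₁ := by
    rw [← sum_card_fiberwise_eq_card_filter, sum_const_nat fun t ht => hf t (sdiff_subset ht)]
  have hQU : #{q ∈ Q | g q ∈ U} = #U * c₂ := by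
    rw [← sum_card_fiberwise_eq_card_filter, sum_const_nat fun t ht => hg t (sdiff_subset ht)]
  have hBadU : #Bad ≤ #U * c₁ := hPU ▸ card_le_card fun p hp => mem_filter.mpr
    ⟨hBad hp, mem_sdiff.mpr ⟨hfT p (hBad hp), by simpa using fun q hq => (hdisj p hp q hq).symm⟩⟩
  have hUB : #U * c₂ ≤ #(Q \ B) := hQU ▸ card_le_card fun q hq => by
    simp only [mem_filter, mem_sdiff, mem_image, U] at hq ⊢
    exact ⟨hq.1, fun hqB => hq.2.2 ⟨q, hqB, rfl⟩⟩
  calc #Bad * #Q ≤ #U * c₁ * (#T * c₂) := by rw [hQ]; gcongr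
    _ = #U * c₂ * (#T * c₁) := by ring
    _ ≤ (#Q - #B) * #P := by rw [hP, ← card_sdiff_of_subset hB]; gcongr

lemma card_filter_update_eq {ι : Type*} [DecidableEq ι] [Fintype ι] {β : ι → Type*}
    [∀ i, DecidableEq (β i)] (S : ∀ i, Finset (β i)) (b : ι) (c : β b) {t : ∀ i, β i}
    (ht : t ∈ Fintype.piFinset (Function.update S b {c})) :
    #{p ∈ Fintype.piFinset S | Function.update p b c = t} = #(S b) := by
  have htb : t b = c := by simpa using Fintype.mem_piFinset.mp ht b
  rw [← card_map ⟨fun v => Function.update t b v, Function.update_injective t b⟩]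
  congr 1
  ext p
  simp only [mem_filter, Fintype.mem_piFinset, mem_map, Function.Embedding.coeFn_mk]
  constructor
  · rintro ⟨hpS, rfl⟩
    exact ⟨p b, hpS b, by simp⟩
  · rintro ⟨v, hv, rfl⟩
    refine ⟨fun i => ?_, by simp [← htb]⟩
    rcases eq_or_ne i b with rfl | hib
    · simpa using hv
    · simpa [hib] using Fintype.mem_piFinset.mp ht i

lemma update_mem_piFinset_update {ι : Type*} [DecidableEq ι] [Fintype ι] {β : ι → Type*}
    [∀ i, DecidableEq (β i)] {S : ∀ i, Finset (β i)} (b : ι) (c : β b) {p : ∀ i, β i}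
    (hp : p ∈ Fintype.piFinset S) :
    Function.update p b c ∈ Fintype.piFinset (Function.update S b {c}) := by
  rw [Fintype.mem_piFinset] at hp ⊢
  intro i
  rcases eq_or_ne i b with rfl | hib <;> simp [*]

section LineBases

variable {ι : Type*} [Fintype ι] [DecidableEq ι]

def lineBases (x : ι → ℕ) (e : ι) : Finset (ι → ℕ) :=
  {p ∈ Fintype.piFinset fun j => range (x j + 1) | p e = 0}

lemma mem_lineBases {x : ι → ℕ} {e : ι} {p : ι → ℕ} :
    p ∈ lineBases x e ↔ p e = 0 ∧ ∀ j, p j ≤ x j := by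
  simp only [lineBases, mem_filter, Fintype.mem_piFinset, mem_range, Nat.lt_succ_iff]
  tauto

lemma card_lineBases (x : ι → ℕ) (e : ι) :
    #(lineBases x e) = ∏ j ∈ univ.erase e, (x j + 1) := by
  convert Fintype.card_filter_piFinset_eq_of_mem (fun j => range (x j + 1)) e
    (show 0 ∈ range (x e + 1) by simp) using 1
  · rfl
  · simp

lemma lineBases_eq_piFinset (x : ι → ℕ) (e : ι) :
    lineBases x e = Fintype.piFinset (Function.update (fun j => range (x j + 1)) e {0}) :=
  (Fintype.piFinset_update_singleton_eq_filter_piFinset_eq _ _ (by simp)).symm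

lemma card_mul_card_lineBases_le {x x' : ι → ℕ} {a b : ι} (hab : a ≠ b)
    (hx : ∀ j, j ≠ b → x j = x' j) {Bad B : Finset (ι → ℕ)} (hBad : Bad ⊆ lineBases x a)
    (hB : B ⊆ lineBases x' b) (hdisj : ∀ p ∈ Bad, ∀ q ∈ B, ¬ ∀ j, j ≠ a → j ≠ b → p j = q j) :
    #Bad * #(lineBases x' b) ≤ (#(lineBases x' b) - #B) * #(lineBases x a) := by
  set S : ι → Finset ℕ := fun j => range (x j + 1)
  set S' : ι → Finset ℕ := fun j => range (x' j + 1)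
  have hT : Function.update (Function.update S' b {0}) a {0} =
      Function.update (Function.update S a {0}) b {0} := by
    rw [Function.update_comm hab]
    funext j
    rcases eq_or_ne j b with rfl | hjb
    · simp [hab.symm]
    · simp [Function.update_apply, S, S', hx j hjb]
  simp only [lineBases_eq_piFinset] at hBad hB ⊢
  refine card_mul_card_le_of_fiberwise (f := (Function.update · b 0)) (g := (Function.update · a 0))
    (fun p hp => update_mem_piFinset_update b 0 hp)
    (fun q hq => hT ▸ update_mem_piFinset_update a 0 hq)
    (fun t ht => card_filter_update_eq _ b 0 ht)
    (fun t ht => card_filter_update_eq _ a 0 (hT ▸ ht)) hBad hB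
    fun p hp q hq hpq => hdisj p hp q hq fun j hja hjb => ?_
  simpa [hja, hjb] using congrFun hpq j

end LineBases

lemma lineIn_inter_lineIn_nonempty {d : ℕ} {x x' : Fin d → ℕ} {a b : Fin d} {p q : Fin d → ℕ}
    (hab : a ≠ b) (hp : p b ≤ x' b) (hq : q a ≤ x a) (hpq : ∀ j, j ≠ a → j ≠ b → p j = q j) :
    (lineIn x a p ∩ lineIn x' b q).Nonempty := by
  refine ⟨Function.update p a (q a), ⟨fun j hj => by simp [hj], by simpa⟩, fun j hj => ?_, ?_⟩
  · rcases eq_or_ne j a with rfl | hja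
    · simp
    · simp [hja, hpq j hja hj]
  · simpa [hab.symm] using hp

lemma mod_ne_add_one_mod {d : ℕ} (hd : 2 ≤ d) (m : ℕ) : m % d ≠ (m + 1) % d := by
  intro h
  have : d ∣ 1 := by simpa using (Nat.modEq_iff_dvd' (Nat.le_succ m)).mp h
  have := Nat.le_of_dvd one_pos this
  omega

end ChainOfLines

open ChainOfLines

theorem stmt8_general (d : ℕ) (hd : 2 ≤ d) (x : Fin d → ℕ → ℕ)
    (hmono : ∀ k, ∀ m : ℕ, 1 ≤ m →
      x k (m - 1) ≤ x k m ∧ (x k (m - 1) < x k m ↔ (k : ℕ) = m % d))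
    (s : ℕ → Fin d) (hs : ∀ m, (s m : ℕ) = m % d)
    (A : ℕ → ℝ)
    (𝓛 : ℕ → Finset (Fin d → ℕ))
    (h𝓛base : ∀ m, 1 ≤ m → ∀ p ∈ 𝓛 m, p (s m) = 0 ∧ ∀ j, p j ≤ x j m)
    (h𝓛card : ∀ m, 1 ≤ m →
      (1 - 1 / A m) * ∏ j ∈ Finset.univ.erase (s m), ((1 : ℝ) + x j m) ≤ (𝓛 m).card)
    (M₀ : ℕ) (hM₀ : ∑ m ∈ Finset.Icc 1 M₀, 1 / A m < 1) :
    ∃ p : ℕ → Fin d → ℕ, (∀ m, 1 ≤ m → m ≤ M₀ → p m ∈ 𝓛 m) ∧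
      ∀ m, 1 ≤ m → m < M₀ →
        (lineIn (fun k => x k m) (s m) (p m) ∩
          lineIn (fun k => x k (m + 1)) (s (m + 1)) (p (m + 1))).Nonempty := by
  set X : ℕ → Fin d → ℕ := fun m k => x k m
  have hs_ne (m : ℕ) : s m ≠ s (m + 1) := fun h =>
    mod_ne_add_one_mod hd m (by rw [← hs, ← hs, h])
  have hx_le (m : ℕ) (j : Fin d) : x j m ≤ x j (m + 1) := by
    simpa using (hmono j (m + 1) (by omega)).1
  have hx_eq (m : ℕ) (j : Fin d) (hj : j ≠ s (m + 1)) : x j m = x j (m + 1) := by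
    have h := hmono j (m + 1) (by omega)
    simp only [Nat.add_sub_cancel] at h
    exact le_antisymm h.1 (not_lt.mp fun hlt => hj (Fin.ext ((h.2.mp hlt).trans (hs _).symm)))
  have h𝓛sub (m : ℕ) (hm : 1 ≤ m) : 𝓛 m ⊆ lineBases (X m) (s m) := fun p hp =>
    mem_lineBases.mpr (h𝓛base m hm p hp)
  obtain ⟨p, hpL, hpR⟩ := exists_chain_of_sum_lt_one
    (R := fun m (p q : Fin d → ℕ) => ∀ j, j ≠ s m → j ≠ s (m + 1) → p j = q j)
    (N := fun m => (#(lineBases (X m) (s m)) : ℝ)) (ε := fun m => 1 / A m)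
    (fun m _ => by exact_mod_cast card_pos.mpr ⟨0, mem_lineBases.mpr ⟨rfl, by simp⟩⟩)
    (fun m hm => by simpa [card_lineBases, add_comm] using h𝓛card m hm)
    (fun m hm B hB Bad hBad hdisj => by
      have h := card_mul_card_lineBases_le (hs_ne m) (hx_eq m) (hBad.trans (h𝓛sub m hm))
        (hB.trans (h𝓛sub (m + 1) (by omega))) hdisj
      rw [← Nat.cast_sub (card_le_card (hB.trans (h𝓛sub (m + 1) (by omega))))]
      exact_mod_cast h)
    M₀ hM₀
  refine ⟨p, hpL, fun m hm hmM => lineIn_inter_lineIn_nonempty (hs_ne m) ?_ ?_ (hpR m hm hmM)⟩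
  · exact ((h𝓛base m hm _ (hpL m hm hmM.le)).2 _).trans (hx_le m _)
  · rw [hx_eq m _ (hs_ne m)]
    exact (h𝓛base (m + 1) (by omega) _ (hpL (m + 1) (by omega) hmM)).2 _

/-- **Lemma 2.4 of Kleptsyn–Navas.** Given nested rectangles `R_m ⊆ ℕ₀^d` growing in the
direction `s m ≡ m (mod d)` only, and inside each `R_m` (for `1 ≤ m`) a set `𝓛 m` of
complete lines in the `s m`-direction of proportion at least `1 − 1/A_m`, if
`∑_{m=1}^{M₀} 1/A_m < 1` then one can choose lines `L_m ∈ 𝓛 m`, `1 ≤ m ≤ M₀`, with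
`L_{m+1}` intersecting `L_m` for every `m < M₀`. Here a set of lines in the
`s m`-direction of `R_m` is represented by the `Finset` of their base points. -/
theorem stmt8 (d : ℕ) (hd : 2 ≤ d) (x : Fin d → ℕ → ℕ)
    (hx0 : ∀ k, x k 0 = 0)
    (hmono : ∀ k, ∀ m : ℕ, 1 ≤ m →
      x k (m - 1) ≤ x k m ∧ (x k (m - 1) < x k m ↔ (k : ℕ) = m % d))
    (s : ℕ → Fin d) (hs : ∀ m, (s m : ℕ) = m % d)
    (A : ℕ → ℝ) (hA : ∀ m, 1 < A m)
    (𝓛 : ℕ → Finset (Fin d → ℕ))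
    (h𝓛base : ∀ m, 1 ≤ m → ∀ p ∈ 𝓛 m, p (s m) = 0 ∧ ∀ j, p j ≤ x j m)
    (h𝓛card : ∀ m, 1 ≤ m →
      (1 - 1 / A m) * ∏ j ∈ Finset.univ.erase (s m), ((1 : ℝ) + x j m) ≤ (𝓛 m).card)
    (M₀ : ℕ) (hM₀ : ∑ m ∈ Finset.Icc 1 M₀, 1 / A m < 1) :
    ∃ p : ℕ → Fin d → ℕ, (∀ m, 1 ≤ m → m ≤ M₀ → p m ∈ 𝓛 m) ∧
      ∀ m, 1 ≤ m → m < M₀ →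
        (lineIn (fun k => x k m) (s m) (p m) ∩
          lineIn (fun k => x k (m + 1)) (s (m + 1)) (p (m + 1))).Nonempty :=
  stmt8_general d hd x hmono s hs A 𝓛 h𝓛base h𝓛card M₀ hM₀
end

section
/- Let d ≥ 2 be an integer and let τ₁,…,τ_d ∈ (0,1) satisfy τ₁ + ⋯ + τ_d < 1. Then the series ∑_{(i₁,…,i_d) ∈ ℤ^d} 1 / (1 + |i₁|^{1/τ₁} + ⋯ + |i_d|^{1/τ_d}) converges. -/
/-!
Choose weights `σₖ ≥ 0` with `∑ σₖ ≤ 1` and `σₖ / τₖ > 1`, e.g. `σₖ = c τₖ` with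
`c = 2 / (1 + ∑ τₖ) > 1`. Writing `aₖ = |iₖ|^{1/τₖ}` and `S = ∑ aₖ`, each `1 + aₖ ≤ 1 + S`, so
`∏ (1 + aₖ)^{σₖ} ≤ (1 + S)^{∑ σₖ} ≤ 1 + S`. Hence the summand is dominated by the product
`∏ (1 + aₖ)^{-σₖ}`, whose series over `ℤ^d` is the product of the one-dimensional series
`∑ₙ (1 + |n|^{1/τₖ})^{-σₖ}`, each convergent since `|n|^{-σₖ/τₖ}` is summable.
-/

open Finset

theorem summable_fin_pi_prod {β : Type*} {n : ℕ} (g : Fin n → β → ℝ) (hg0 : ∀ k b, 0 ≤ g k b)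
    (hg : ∀ k, Summable (g k)) : Summable (fun i : Fin n → β => ∏ k, g k (i k)) := by
  induction n with
  | zero => exact Summable.of_finite
  | succ n ih =>
    have htail := ih (fun k => g k.succ) (fun _ _ => hg0 _ _) (fun _ => hg _)
    have hsplit := (hg 0).mul_of_nonneg htail (fun _ => hg0 _ _)
      (fun _ => prod_nonneg fun _ _ => hg0 _ _)
    refine (hsplit.comp_injective (Fin.consEquiv fun _ => β).symm.injective).congr fun i => ?_
    simp only [Function.comp, Fin.consEquiv_symm_apply, Fin.prod_univ_succ, Fin.tail]

theorem Real.summable_one_add_abs_int_rpow_neg {p s : ℝ} (hs : 0 ≤ s)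
    (hps : 1 < p * s) : Summable (fun n : ℤ => (1 + |(n : ℝ)| ^ p) ^ (-s)) := by
  refine (Real.summable_abs_int_rpow hps).of_norm_bounded_eventually ?_
  filter_upwards [(Set.finite_singleton (0 : ℤ)).compl_mem_cofinite] with n hn
  have habs : 0 < |(n : ℝ)| := by simpa using hn
  have hpow : 0 < |(n : ℝ)| ^ p := Real.rpow_pos_of_pos habs p
  rw [Real.norm_of_nonneg (by positivity), neg_mul_eq_mul_neg, Real.rpow_mul habs.le]
  exact Real.rpow_le_rpow_of_nonpos hpow (by linarith) (by linarith)

theorem prod_one_add_rpow_le_one_add_sum {ι : Type*} (s : Finset ι) {a σ : ι → ℝ}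
    (ha : ∀ k ∈ s, 0 ≤ a k) (hσ : ∀ k ∈ s, 0 ≤ σ k) (hσsum : ∑ k ∈ s, σ k ≤ 1) :
    ∏ k ∈ s, (1 + a k) ^ σ k ≤ 1 + ∑ k ∈ s, a k := by
  have hS : 1 ≤ 1 + ∑ k ∈ s, a k := le_add_of_nonneg_right (sum_nonneg ha)
  calc ∏ k ∈ s, (1 + a k) ^ σ k
      ≤ ∏ k ∈ s, (1 + ∑ j ∈ s, a j) ^ σ k := by
        refine prod_le_prod (fun k hk => by have := ha k hk; positivity) fun k hk => ?_
        exact Real.rpow_le_rpow (by linarith [ha k hk]) (by linarith [single_le_sum ha hk])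
          (hσ k hk)
    _ = (1 + ∑ j ∈ s, a j) ^ ∑ k ∈ s, σ k := (Real.rpow_sum_of_pos (by linarith) _ _).symm
    _ ≤ 1 + ∑ j ∈ s, a j := by
        simpa using Real.rpow_le_rpow_of_exponent_le hS hσsum

theorem summable_inv_one_add_sum_abs_rpow {n : ℕ} {p σ : Fin n → ℝ}
    (hσ : ∀ k, 0 ≤ σ k) (hσsum : ∑ k, σ k ≤ 1) (hpσ : ∀ k, 1 < p k * σ k) :
    Summable (fun i : Fin n → ℤ => (1 + ∑ k, |(i k : ℝ)| ^ p k)⁻¹) := by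
  refine Summable.of_nonneg_of_le (fun i => by positivity) (fun i => ?_)
    (summable_fin_pi_prod (fun k (m : ℤ) => (1 + |(m : ℝ)| ^ p k) ^ (-σ k))
      (fun _ _ => by positivity) fun k => Real.summable_one_add_abs_int_rpow_neg (hσ k) (hpσ k))
  have hprod :
      ∏ k, (1 + |(i k : ℝ)| ^ p k) ^ (-σ k) = (∏ k, (1 + |(i k : ℝ)| ^ p k) ^ σ k)⁻¹ := by
    rw [← prod_inv_distrib]
    exact prod_congr rfl fun k _ => Real.rpow_neg (by positivity) _
  rw [hprod]
  exact inv_anti₀ (prod_pos fun k _ => by positivity)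
    (prod_one_add_rpow_le_one_add_sum _ (fun k _ => by positivity) (fun k _ => hσ k) hσsum)

theorem stmt10_general (d : ℕ) (τ : Fin d → ℝ)
    (hτ0 : ∀ k, 0 < τ k) (hsum : ∑ k, τ k < 1) :
    Summable (fun i : Fin d → ℤ => 1 / (1 + ∑ k, |(i k : ℝ)| ^ (1 / τ k))) := by
  set c : ℝ := 2 / (1 + ∑ k, τ k)
  have hT : 0 ≤ ∑ k, τ k := sum_nonneg fun k _ => (hτ0 k).le
  have hc : 1 < c := by rw [lt_div_iff₀ (by linarith)]; linarith
  have hcT : ∑ k, c * τ k ≤ 1 := by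
    rw [← mul_sum, div_mul_eq_mul_div, div_le_one (by linarith)]; linarith
  have hcτ : ∀ k, 1 < 1 / τ k * (c * τ k) := fun k => by
    rwa [one_div_mul_eq_div, mul_div_assoc, div_self (hτ0 k).ne', mul_one]
  simpa only [one_div] using summable_inv_one_add_sum_abs_rpow
    (fun k => mul_nonneg (by linarith) (hτ0 k).le) hcT hcτ

/-- If `d ≥ 2` and `τ₁,…,τ_d ∈ (0,1)` satisfy `τ₁ + ⋯ + τ_d < 1`, then the series
`∑_{(i₁,…,i_d) ∈ ℤ^d} 1/(1 + |i₁|^{1/τ₁} + ⋯ + |i_d|^{1/τ_d})` converges. -/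
theorem stmt10 (d : ℕ) (hd : 2 ≤ d) (τ : Fin d → ℝ)
    (hτ0 : ∀ k, 0 < τ k) (hτ1 : ∀ k, τ k < 1) (hsum : ∑ k, τ k < 1) :
    Summable (fun i : Fin d → ℤ => 1 / (1 + ∑ k, |(i k : ℝ)| ^ (1 / τ k))) :=
  stmt10_general d τ hτ0 hsum
end

section
/- Let d ≥ 2 be an integer, let τ₁,…,τ_d ∈ (0,1), and for (i₁,…,i_d) ∈ ℤ^d set ℓ_{i₁,…,i_d} = 1 / (1 + |i₁|^{1/τ₁} + ⋯ + |i_d|^{1/τ_d}). Then for every k ∈ {1,…,d} and every (i₁,…,i_d) ∈ ℤ^d one has | ℓ_{i₁,…,1+i_k,…,i_d} / ℓ_{i₁,…,i_k,…,i_d} − 1 | · ℓ_{i₁,…,i_k,…,i_d}^{−τ_k} ≤ 2^{1/τ_k} / τ_k. In particular, with τ' = min{τ₁,…,τ_d}, the left-hand side is bounded by C' = 2^{1/τ'} / τ' for all k and all integer tuples. -/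
/-!
Write `S = A + |i_k|^p` and `S' = A + |1 + i_k|^p` with `p = 1/τ_k`, where `A ≥ 1` collects the
other coordinates, so that the left-hand side is `|S - S'| S^τ / S'`. Let `lo ≤ hi ≤ lo + 1` be
the two values `|i_k|, |1 + i_k|`. Both `S` and `S'` lie in `[B, 2^p B]` for `B = A + lo^p`, by the
power mean inequality `(lo + 1)^p ≤ 2^(p-1) (lo^p + 1)`. Convexity of `x ↦ x^p` gives
`|S - S'| ≤ p hi^(p-1) = p (hi^p)^(1-τ) ≤ p (2^p B)^(1-τ)`, and the powers of `2^p B` recombine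
to `p 2^p B / B = 2^p / τ`. The bound decreases in `τ`, whence the uniform constant.
-/

open Real Finset

lemma rpow_sub_rpow_le_mul_sub {p a b : ℝ} (hp : 1 ≤ p) (ha : 0 ≤ a) (hab : a ≤ b) :
    b ^ p - a ^ p ≤ p * b ^ (p - 1) * (b - a) := by
  rcases hab.eq_or_lt with rfl | hlt
  · simp
  have hslope := (convexOn_rpow hp).slope_le_of_hasDerivAt (Set.mem_Ici.2 ha)
    (Set.mem_Ici.2 (ha.trans hlt.le)) hlt (hasDerivAt_rpow_const (Or.inr hp))
  rwa [slope_def_field, div_le_iff₀ (sub_pos.2 hlt)] at hslope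

lemma abs_div_sub_one_mul_rpow_le_of_abs_sub_le {S S' B K c τ : ℝ} (hτ : 0 ≤ τ)
    (hc : 0 ≤ c) (hB : 0 < B) (hS : 0 ≤ S) (hSK : S ≤ K * B) (hBS' : B ≤ S')
    (hdiff : |S - S'| ≤ c * (K * B) ^ (1 - τ)) :
    |S / S' - 1| * S ^ τ ≤ c * K := by
  have hS' : 0 < S' := hB.trans_le hBS'
  have hKB : 0 ≤ K * B := hS.trans hSK
  calc |S / S' - 1| * S ^ τ = |S - S'| * S ^ τ / S' := by
        rw [div_sub_one hS'.ne', abs_div, abs_of_pos hS', div_mul_eq_mul_div]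
    _ ≤ c * (K * B) ^ (1 - τ) * (K * B) ^ τ / B := by gcongr
    _ = c * K := by
        rw [mul_assoc, ← rpow_add' hKB (by norm_num), sub_add_cancel, rpow_one, ← mul_assoc,
          mul_div_cancel_right₀ _ hB.ne']

theorem abs_div_sub_one_mul_rpow_le {τ A a b : ℝ} (hτ0 : 0 < τ) (hτ1 : τ ≤ 1) (hA : 1 ≤ A)
    (ha : 0 ≤ a) (hb : 0 ≤ b) (hab : |a - b| ≤ 1) :
    |(A + a ^ (1 / τ)) / (A + b ^ (1 / τ)) - 1| * (A + a ^ (1 / τ)) ^ τ ≤ 2 ^ (1 / τ) / τ := by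
  set p := 1 / τ with hp_def
  have hp : 1 ≤ p := by rw [hp_def, le_div_iff₀ hτ0]; linarith
  have hpτ : p * τ = 1 := by rw [hp_def, one_div_mul_cancel hτ0.ne']
  set lo := min a b
  set hi := max a b
  have hlo : 0 ≤ lo := le_min ha hb
  have hlohi : lo ≤ hi := min_le_max
  have hhi : hi - lo ≤ 1 := by rw [max_sub_min_eq_abs, abs_sub_comm]; exact hab
  set B := A + lo ^ p with hB_def
  have hB : 0 < B := by positivity
  have hAB : A ≤ B := le_add_of_nonneg_right (by positivity)
  have h2 : (2 : ℝ) ^ p = 2 * 2 ^ (p - 1) := by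
    rw [← rpow_one_add' zero_le_two (by linarith), add_sub_cancel]
  have h2_one : (1 : ℝ) ≤ 2 ^ (p - 1) := one_le_rpow one_le_two (by linarith)
  have hhi_pow : hi ^ p ≤ 2 ^ (p - 1) * B := calc
    hi ^ p ≤ (lo + 1) ^ p := by gcongr; linarith
    _ ≤ 2 ^ (p - 1) * (lo ^ p + 1 ^ p) := by
        exact_mod_cast NNReal.rpow_add_le_mul_rpow_add_rpow ⟨lo, hlo⟩ 1 hp
    _ ≤ 2 ^ (p - 1) * B := by rw [one_rpow]; gcongr; linarith
  have hpow_mem : ∀ x, lo ≤ x → x ≤ hi → lo ^ p ≤ x ^ p ∧ x ^ p ≤ hi ^ p := fun x h1 h2 =>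
    ⟨by gcongr, by gcongr; linarith⟩
  obtain ⟨ha1, ha2⟩ := hpow_mem a (min_le_left a b) (le_max_left a b)
  obtain ⟨hb1, hb2⟩ := hpow_mem b (min_le_right a b) (le_max_right a b)
  have hdiff : |(A + a ^ p) - (A + b ^ p)| ≤ p * (2 ^ p * B) ^ (1 - τ) := calc
    |(A + a ^ p) - (A + b ^ p)| ≤ hi ^ p - lo ^ p := by
        rw [add_sub_add_left_eq_sub]; exact abs_sub_le_of_le_of_le ha1 ha2 hb1 hb2
    _ ≤ p * hi ^ (p - 1) * (hi - lo) := rpow_sub_rpow_le_mul_sub hp hlo hlohi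
    _ ≤ p * (hi ^ p) ^ (1 - τ) := by
        rw [← rpow_mul (hlo.trans hlohi), mul_one_sub, hpτ]
        exact mul_le_of_le_one_right (by positivity) hhi
    _ ≤ p * (2 ^ p * B) ^ (1 - τ) := by
        gcongr
        rw [h2]; nlinarith
  have hS : A + a ^ p ≤ 2 ^ p * B := by rw [h2]; nlinarith
  calc _ ≤ p * 2 ^ p := abs_div_sub_one_mul_rpow_le_of_abs_sub_le hτ0.le (by positivity) hB
        (by positivity) hS (by linarith) hdiff
    _ = 2 ^ p / τ := by rw [hp_def]; ring

section AnisotropicWeight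

variable {ι : Type*} [Fintype ι] [DecidableEq ι]

noncomputable def anisotropicWeight (τ : ι → ℝ) (i : ι → ℤ) : ℝ :=
  1 + ∑ j, |(i j : ℝ)| ^ (1 / τ j)

lemma anisotropicWeight_update (τ : ι → ℝ) (i : ι → ℤ) (k : ι) (n : ℤ) :
    anisotropicWeight τ (Function.update i k n) =
      (1 + ∑ j ∈ univ.erase k, |(i j : ℝ)| ^ (1 / τ j)) + |(n : ℝ)| ^ (1 / τ k) := by
  rw [anisotropicWeight, ← add_sum_erase _ _ (mem_univ k), Function.update_self,
    sum_congr rfl fun j hj => by rw [Function.update_of_ne (ne_of_mem_erase hj)]]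
  ring

theorem abs_div_sub_one_mul_rpow_le_of_update {τ : ι → ℝ} {k : ι} (hτ0 : 0 < τ k)
    (hτ1 : τ k ≤ 1) (i : ι → ℤ) :
    |(1 / anisotropicWeight τ (Function.update i k (1 + i k))) / (1 / anisotropicWeight τ i) - 1| *
      (1 / anisotropicWeight τ i) ^ (-τ k) ≤ 2 ^ (1 / τ k) / τ k := by
  have hA : 1 ≤ 1 + ∑ j ∈ univ.erase k, |(i j : ℝ)| ^ (1 / τ j) :=
    le_add_of_nonneg_right (sum_nonneg fun j _ => by positivity)
  have hw : 0 ≤ anisotropicWeight τ i := by unfold anisotropicWeight; positivity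
  have hi : anisotropicWeight τ i =
      (1 + ∑ j ∈ univ.erase k, |(i j : ℝ)| ^ (1 / τ j)) + |(i k : ℝ)| ^ (1 / τ k) := by
    simpa using anisotropicWeight_update τ i k (i k)
  rw [one_div (anisotropicWeight τ i), one_div (anisotropicWeight τ _), inv_div_inv,
    inv_rpow hw, rpow_neg hw, inv_inv, hi, anisotropicWeight_update]
  refine abs_div_sub_one_mul_rpow_le hτ0 hτ1 hA (abs_nonneg _) (abs_nonneg _) ?_
  push_cast
  simpa using abs_abs_sub_abs_le_abs_sub (i k : ℝ) (1 + i k)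

end AnisotropicWeight

lemma two_rpow_one_div_div_le {s t : ℝ} (hs : 0 < s) (hst : s ≤ t) :
    2 ^ (1 / t) / t ≤ 2 ^ (1 / s) / s :=
  div_le_div₀ (by positivity)
    (rpow_le_rpow_of_exponent_le one_le_two (one_div_le_one_div_of_le hs hst)) hs hst

theorem stmt11_general (d : ℕ) (τ : Fin d → ℝ)
    (hτ0 : ∀ k, 0 < τ k) (hτ1 : ∀ k, τ k < 1)
    (ℓ : (Fin d → ℤ) → ℝ)
    (hℓ : ∀ i, ℓ i = 1 / (1 + ∑ k, |(i k : ℝ)| ^ (1 / τ k))) :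
    (∀ (k : Fin d) (i : Fin d → ℤ),
      |ℓ (Function.update i k (1 + i k)) / ℓ i - 1| * ℓ i ^ (-τ k) ≤ 2 ^ (1 / τ k) / τ k) ∧
    (∀ (k : Fin d) (i : Fin d → ℤ),
      |ℓ (Function.update i k (1 + i k)) / ℓ i - 1| * ℓ i ^ (-τ k) ≤
        2 ^ (1 / ⨅ j, τ j) / ⨅ j, τ j) := by
  have hbound : ∀ (k : Fin d) (i : Fin d → ℤ),
      |ℓ (Function.update i k (1 + i k)) / ℓ i - 1| * ℓ i ^ (-τ k) ≤ 2 ^ (1 / τ k) / τ k := by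
    intro k i
    rw [hℓ, hℓ]
    exact abs_div_sub_one_mul_rpow_le_of_update (hτ0 k) (hτ1 k).le i
  refine ⟨hbound, fun k i => (hbound k i).trans ?_⟩
  have : Nonempty (Fin d) := ⟨k⟩
  obtain ⟨j, hj⟩ := exists_eq_ciInf_of_finite (f := τ)
  exact two_rpow_one_div_div_le (hj ▸ hτ0 j) (ciInf_le (Set.finite_range τ).bddBelow k)

/-- For `d ≥ 2`, `τ₁,…,τ_d ∈ (0,1)` and
`ℓ_{i₁,…,i_d} = 1/(1 + |i₁|^{1/τ₁} + ⋯ + |i_d|^{1/τ_d})`, one has, for every `k` and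
every integer tuple, `|ℓ_{…,1+i_k,…}/ℓ_{…,i_k,…} − 1| · ℓ_{…,i_k,…}^{−τ_k} ≤ 2^{1/τ_k}/τ_k`;
in particular the left-hand side is bounded by `2^{1/τ'}/τ'` with `τ' = min τ_k`. -/
theorem stmt11 (d : ℕ) (hd : 2 ≤ d) (τ : Fin d → ℝ)
    (hτ0 : ∀ k, 0 < τ k) (hτ1 : ∀ k, τ k < 1)
    (ℓ : (Fin d → ℤ) → ℝ)
    (hℓ : ∀ i, ℓ i = 1 / (1 + ∑ k, |(i k : ℝ)| ^ (1 / τ k))) :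
    (∀ (k : Fin d) (i : Fin d → ℤ),
      |ℓ (Function.update i k (1 + i k)) / ℓ i - 1| * ℓ i ^ (-τ k) ≤ 2 ^ (1 / τ k) / τ k) ∧
    (∀ (k : Fin d) (i : Fin d → ℤ),
      |ℓ (Function.update i k (1 + i k)) / ℓ i - 1| * ℓ i ^ (-τ k) ≤
        2 ^ (1 / ⨅ j, τ j) / ⨅ j, τ j) :=
  stmt11_general d τ hτ0 hτ1 ℓ hℓ
end

section
/- Let τ ∈ (0,1). Then for every integer a ≥ 1 one has (a^{1/τ} − (a−1)^{1/τ}) / (1 + (a−1)^{1/τ})^{1−τ} · ( (1 + a^{1/τ}) / (1 + (a−1)^{1/τ}) )^τ ≤ 2^{1/τ} / τ. -/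
/-!
Write `β = 1/τ > 1`, `x = (a-1)^β`, `y = a^β`; the left-hand side is `(y - x) (1 + y)^τ / (1 + x)`.
Three estimates suffice: the tangent line of the convex map `t ↦ t^β` at `a` gives
`y - x ≤ β a^(β-1)`; since `y ≥ 1`, `(1 + y)^τ ≤ (2y)^τ = 2^τ a`; and the power-mean inequality
gives `a^β = (1 + (a-1))^β ≤ 2^(β-1) (1 + x)`. Together the left-hand side is at most
`β 2^(τ+β-1) ≤ β 2^β`.
-/

open Real

namespace Real

lemma rpow_sub_rpow_le_mul_rpow_sub_one_mul {x y p : ℝ} (hx : 0 ≤ x) (hy : 0 < y) (hp : 1 ≤ p) :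
    y ^ p - x ^ p ≤ p * y ^ (p - 1) * (y - x) := by
  have hs : -1 ≤ x / y - 1 := by linarith [div_nonneg hx hy.le]
  have hbernoulli := one_add_mul_self_le_rpow_one_add hs hp
  rw [add_sub_cancel, div_rpow hx hy.le, le_div_iff₀ (rpow_pos_of_pos hy p)] at hbernoulli
  have hyp : y ^ p = y ^ (p - 1) * y := by rw [rpow_sub_one hy.ne', div_mul_cancel₀ _ hy.ne']
  have hexpand : (1 + p * (x / y - 1)) * y ^ p = y ^ p - p * y ^ (p - 1) * (y - x) := by
    rw [hyp]; field_simp; ring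
  linarith

lemma rpow_add_le_mul_rpow_add_rpow {a b p : ℝ} (ha : 0 ≤ a) (hb : 0 ≤ b) (hp : 1 ≤ p) :
    (a + b) ^ p ≤ 2 ^ (p - 1) * (a ^ p + b ^ p) := by
  lift a to NNReal using ha
  lift b to NNReal using hb
  exact_mod_cast NNReal.rpow_add_le_mul_rpow_add_rpow a b hp

lemma one_add_rpow_le_two_rpow_mul_rpow {y τ : ℝ} (hy : 1 ≤ y) (hτ : 0 ≤ τ) :
    (1 + y) ^ τ ≤ 2 ^ τ * y ^ τ := by
  rw [← mul_rpow zero_le_two (by linarith)]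
  gcongr
  linarith

end Real

lemma div_rpow_one_sub_mul_div_rpow {d u v τ : ℝ} (hu : 0 ≤ u) (hv : 0 < v) :
    d / v ^ (1 - τ) * (u / v) ^ τ = d * u ^ τ / v := by
  rw [div_rpow hu hv.le, div_mul_div_comm, ← rpow_add hv, sub_add_cancel, rpow_one]

/-- For `τ ∈ (0,1)` and every integer `a ≥ 1`,
`(a^{1/τ} − (a−1)^{1/τ}) / (1 + (a−1)^{1/τ})^{1−τ} · ((1 + a^{1/τ})/(1 + (a−1)^{1/τ}))^τ
  ≤ 2^{1/τ}/τ`. -/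
theorem stmt13 (τ : ℝ) (hτ0 : 0 < τ) (hτ1 : τ < 1) (a : ℕ) (ha : 1 ≤ a) :
    ((a : ℝ) ^ (1 / τ) - ((a : ℝ) - 1) ^ (1 / τ)) / (1 + ((a : ℝ) - 1) ^ (1 / τ)) ^ (1 - τ) *
      ((1 + (a : ℝ) ^ (1 / τ)) / (1 + ((a : ℝ) - 1) ^ (1 / τ))) ^ τ ≤ 2 ^ (1 / τ) / τ := by
  have hA : (1 : ℝ) ≤ a := by exact_mod_cast ha
  set A : ℝ := (a : ℝ)
  set β : ℝ := 1 / τ with hβ_def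
  have hβ : 1 ≤ β := (one_lt_one_div hτ0 hτ1).le
  have hAβ : 1 ≤ A ^ β := one_le_rpow hA (by linarith)
  have hx : 0 < 1 + (A - 1) ^ β := by positivity [sub_nonneg.2 hA]
  have hdiff : A ^ β - (A - 1) ^ β ≤ β * A ^ (β - 1) := by
    simpa using rpow_sub_rpow_le_mul_rpow_sub_one_mul (y := A) (sub_nonneg.2 hA) (by linarith) hβ
  have hnum : (1 + A ^ β) ^ τ ≤ 2 ^ τ * A := by
    simpa [← rpow_mul (by linarith : (0 : ℝ) ≤ A), hβ_def, hτ0.ne'] using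
      one_add_rpow_le_two_rpow_mul_rpow hAβ hτ0.le
  have hden : A ^ β ≤ 2 ^ (β - 1) * (1 + (A - 1) ^ β) := by
    simpa using rpow_add_le_mul_rpow_add_rpow zero_le_one (sub_nonneg.2 hA) hβ
  have hpow : (2 : ℝ) ^ τ * 2 ^ (β - 1) ≤ 2 ^ β := by
    rw [← rpow_add two_pos]
    exact rpow_le_rpow_of_exponent_le one_le_two (by linarith)
  rw [div_rpow_one_sub_mul_div_rpow (by linarith) hx, div_le_iff₀ hx]
  calc (A ^ β - (A - 1) ^ β) * (1 + A ^ β) ^ τ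
      ≤ β * A ^ (β - 1) * (2 ^ τ * A) := by gcongr
    _ = β * 2 ^ τ * A ^ β := by
      rw [rpow_sub_one (by linarith : A ≠ 0)]; field_simp
    _ ≤ β * 2 ^ τ * (2 ^ (β - 1) * (1 + (A - 1) ^ β)) := by gcongr
    _ ≤ β * 2 ^ β * (1 + (A - 1) ^ β) := by
      rw [← mul_assoc, mul_assoc β]; gcongr
    _ = 2 ^ β / τ * (1 + (A - 1) ^ β) := by rw [hβ_def]; ring
end
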